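/- Let A be a Hurwitz real n×n matrix, b, c ∈ ℝⁿ, λ ∈ ℝ, and v ∈ ℝⁿ with (A + b cᵀ) v = λ v. Assume cᵀ e^{At} v ≥ 0 for all t ≥ 0 and cᵀ v ≠ 0. Then, writing k' := −cᵀ A⁻¹ b for the slope of the I/O static characteristic of the linearized system: λ < 0 if and only if k' < 1, and λ > 0 if and only if k' > 1. (Stability dichotomy for the dominant eigenvalue of the closed-loop linearization, established in the proof of Theorem 7: equilibria with k'_y(ū) < 1 are locally asymptotically stable, and equilibria with k'_y(ū) > 1 have a nontrivial unstable manifold.) -/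

import Mathlib

/-!
Eliminating `b` from the eigenvector equation gives `(cᵀv) (1 - k') = λ · cᵀA⁻¹v`, and
`cᵀv > 0` since `cᵀv = cᵀe^{0A}v ≥ 0`. So `λ` and `1 - k'` have opposite signs as soon as
`cᵀA⁻¹v < 0`. The function `g t = cᵀA⁻¹e^{tA}v` has derivative `cᵀe^{tA}v`, which is
nonnegative for `t ≥ 0` and positive at `t = 0`, and `g t → 0` because `e^{tA} → 0` for Hurwitz
`A` (on a generalized eigenspace of eigenvalue `μ`, `e^{tA}` acts as `e^{tμ}` times a polynomial
in `t`). Hence `g 0 < 0`.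
-/

open Matrix MeasureTheory Set

/-- A closed convex cone in `ℝ^d`. -/
def IsClosedConvexCone {d : ℕ} (K : Set (Fin d → ℝ)) : Prop :=
  IsClosed K ∧ Convex ℝ K ∧ ∀ c : ℝ, 0 ≤ c → ∀ x ∈ K, c • x ∈ K

/-- The matrix exponential `e^A`. -/
noncomputable def mexp {n : ℕ} (A : Matrix (Fin n) (Fin n) ℝ) : Matrix (Fin n) (Fin n) ℝ :=
  NormedSpace.exp A

/-- `μ : ℂ` is a (complex) eigenvalue of the real matrix `A`. -/
def IsEigenvalue {n : ℕ} (A : Matrix (Fin n) (Fin n) ℝ) (μ : ℂ) : Prop :=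
  Module.End.HasEigenvalue (Matrix.toLin' (A.map (Complex.ofReal))) μ

/-- A real square matrix is Hurwitz if all its complex eigenvalues have negative real part. -/
def Hurwitz {n : ℕ} (A : Matrix (Fin n) (Fin n) ℝ) : Prop :=
  ∀ μ : ℂ, IsEigenvalue A μ → μ.re < 0

open Filter Topology Finset
open scoped Nat

-- Matrices carry no global norm; any choice does, as `NormedSpace.exp` only sees the topology.
attribute [local instance] Matrix.linftyOpNormedAddCommGroup Matrix.linftyOpNormedRing
  Matrix.linftyOpNormedSpace Matrix.linftyOpNormedAlgebra

theorem Complex.tendsto_exp_mul_mul_pow_atTop {μ : ℂ} (hμ : μ.re < 0) (j : ℕ) :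
    Tendsto (fun t : ℝ => Complex.exp (t * μ) * (t : ℂ) ^ j) atTop (𝓝 0) := by
  rw [tendsto_zero_iff_norm_tendsto_zero]
  refine (tendsto_rpow_mul_exp_neg_mul_atTop_nhds_zero j (-μ.re) (by linarith)).congr' ?_
  filter_upwards [eventually_ge_atTop 0] with t ht
  rw [norm_mul, Complex.norm_exp, norm_pow, Complex.norm_real, Real.norm_of_nonneg ht,
    Real.rpow_natCast]
  simp [mul_comm]

section MatrixExp

variable {ι : Type*} [Fintype ι] [DecidableEq ι]

theorem Matrix.exp_mulVec_eq_sum_of_pow_mulVec_eq_zero {𝕂 : Type*} [RCLike 𝕂]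
    {N : Matrix ι ι 𝕂} {y : ι → 𝕂} {k : ℕ} (hN : (N ^ k) *ᵥ y = 0) :
    NormedSpace.exp N *ᵥ y = ∑ j ∈ range k, (j !⁻¹ : 𝕂) • (N ^ j *ᵥ y) := by
  have hsum := (NormedSpace.exp_series_hasSum_exp' (𝕂 := 𝕂) N).map (mulVec.addMonoidHomLeft y)
    (continuous_id.matrix_mulVec continuous_const)
  refine (hsum.unique (hasSum_sum_of_ne_finset_zero (s := range k) fun j hj => ?_)).trans ?_
  · rw [Finset.mem_range, not_lt] at hj
    change ((j !⁻¹ : 𝕂) • N ^ j) *ᵥ y = 0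
    rw [smul_mulVec, ← Nat.sub_add_cancel hj, pow_add, ← mulVec_mulVec, hN, mulVec_zero,
      smul_zero]
  · simp [mulVec.addMonoidHomLeft, smul_mulVec]

theorem Matrix.exp_smul_mulVec_eq_sum {B : Matrix ι ι ℂ} {μ : ℂ} {y : ι → ℂ} {k : ℕ}
    (hy : ((B - μ • 1) ^ k) *ᵥ y = 0) (t : ℂ) :
    NormedSpace.exp (t • B) *ᵥ y =
      ∑ j ∈ range k, (Complex.exp (t * μ) * t ^ j / j !) • ((B - μ • 1) ^ j *ᵥ y) := by
  have hsplit : t • B = algebraMap ℂ _ (t * μ) + t • (B - μ • 1) := by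
    rw [Algebra.algebraMap_eq_smul_one, smul_sub, smul_smul]; abel
  have hcomm : Commute (algebraMap ℂ (Matrix ι ι ℂ) (t * μ)) (t • (B - μ • 1)) :=
    Algebra.commute_algebraMap_left _ _
  have hscalar : NormedSpace.exp (algebraMap ℂ (Matrix ι ι ℂ) (t * μ)) =
      algebraMap ℂ _ (Complex.exp (t * μ)) := by
    rw [Complex.exp_eq_exp_ℂ]
    exact (NormedSpace.map_exp _ (continuous_algebraMap ℂ _) _).symm
  rw [hsplit, Matrix.exp_add_of_commute _ _ hcomm, hscalar,
    ← mulVec_mulVec, exp_mulVec_eq_sum_of_pow_mulVec_eq_zero (N := t • (B - μ • 1)) (k := k) ?_,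
    Algebra.algebraMap_eq_smul_one, smul_mulVec, one_mulVec, Finset.smul_sum]
  · refine sum_congr rfl fun j _ => ?_
    rw [smul_pow, smul_mulVec, smul_smul, smul_smul]
    ring_nf
  · rw [smul_pow, smul_mulVec, hy, smul_zero]

theorem Matrix.tendsto_exp_smul_mulVec_atTop {B : Matrix ι ι ℂ}
    (hB : ∀ μ, Module.End.HasEigenvalue (toLin' B) μ → μ.re < 0) (x : ι → ℂ) :
    Tendsto (fun t : ℝ => NormedSpace.exp ((t : ℂ) • B) *ᵥ x) atTop (𝓝 0) := by
  have hx : x ∈ ⨆ μ, Module.End.maxGenEigenspace (toLin' B) μ := by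
    rw [Module.End.iSup_maxGenEigenspace_eq_top]; trivial
  refine Submodule.iSup_induction (motive := fun x => Tendsto (fun t : ℝ =>
    NormedSpace.exp ((t : ℂ) • B) *ᵥ x) atTop (𝓝 0)) _ hx (fun μ y hy => ?_) (by simp)
    fun y z hy hz => by simpa [mulVec_add] using hy.add hz
  rcases eq_or_ne y 0 with rfl | hy0
  · simp
  have hμ : μ.re < 0 := hB μ <| (Module.End.hasUnifEigenvalue_iff_hasUnifEigenvalue_one
    (by simp)).1 <| (Submodule.ne_bot_iff _).2 ⟨y, hy, hy0⟩
  rw [Module.End.maxGenEigenspace_eq_genEigenspace_finrank, Module.End.mem_genEigenspace_nat,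
    LinearMap.mem_ker] at hy
  have hker : ((B - μ • 1) ^ Module.finrank ℂ (ι → ℂ)) *ᵥ y = 0 := by
    change toLinAlgEquiv' ((B - μ • 1) ^ _) y = 0
    rw [map_pow, map_sub, map_smul, map_one]
    exact hy
  simp_rw [exp_smul_mulVec_eq_sum hker]
  rw [← sum_const_zero]
  refine tendsto_finsetSum _ fun j _ => ?_
  simpa [mul_div_assoc] using
    ((Complex.tendsto_exp_mul_mul_pow_atTop hμ j).div_const (j ! : ℂ)).smul_const
      ((B - μ • 1) ^ j *ᵥ y)

end MatrixExp

theorem mexp_zero {n : ℕ} : mexp (0 : Matrix (Fin n) (Fin n) ℝ) = 1 :=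
  NormedSpace.exp_zero

theorem mexp_map_ofReal {n : ℕ} (M : Matrix (Fin n) (Fin n) ℝ) :
    (mexp M).map Complex.ofReal = NormedSpace.exp (M.map Complex.ofReal) :=
  NormedSpace.map_exp (Complex.ofRealHom.mapMatrix)
    (continuous_id.matrix_map Complex.continuous_ofReal) M

theorem Hurwitz.isUnit_det {n : ℕ} {A : Matrix (Fin n) (Fin n) ℝ} (hA : Hurwitz A) :
    IsUnit A.det := by
  have h := ((LinearMap.not_hasEigenvalue_zero_tfae (toLin' (A.map Complex.ofReal))).out 0 3).1
    fun h0 => (hA 0 h0).false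
  rw [LinearMap.det_toLin'] at h
  exact isUnit_iff_ne_zero.2 fun h0 => h <|
    (Complex.ofRealHom.map_det A).symm.trans (by simp [h0])

theorem Hurwitz.tendsto_mexp_smul_mulVec_atTop {n : ℕ} {A : Matrix (Fin n) (Fin n) ℝ}
    (hA : Hurwitz A) (v : Fin n → ℝ) :
    Tendsto (fun t : ℝ => mexp (t • A) *ᵥ v) atTop (𝓝 0) := by
  have hC := tendsto_pi_nhds.1 (Matrix.tendsto_exp_smul_mulVec_atTop hA (Complex.ofReal ∘ v))
  refine tendsto_pi_nhds.2 fun i => tendsto_ofReal_iff.1 ?_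
  convert hC i using 2 with t
  · change Complex.ofRealHom _ = _
    rw [RingHom.map_mulVec]
    change ((mexp (t • A)).map Complex.ofReal *ᵥ Complex.ofReal ∘ v) i = _
    rw [mexp_map_ofReal]
    congr 3
    ext
    simp
  · simp

theorem lt_of_hasDerivAt_nonneg_of_tendsto_atTop {g g' : ℝ → ℝ} {a L : ℝ}
    (hg : ∀ t, a ≤ t → HasDerivAt g (g' t) t) (hg' : ∀ t, a ≤ t → 0 ≤ g' t)
    (hg'a : ContinuousAt g' a) (hg'a_pos : 0 < g' a) (hL : Tendsto g atTop (𝓝 L)) : g a < L := by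
  have hcont : ContinuousOn g (Ici a) := fun t ht => (hg t ht).continuousAt.continuousWithinAt
  have hmono : MonotoneOn g (Ici a) := by
    refine monotoneOn_of_hasDerivWithinAt_nonneg (convex_Ici a) hcont (fun t ht => ?_)
      fun t ht => hg' t (interior_subset ht)
    exact (hg t (interior_subset ht)).hasDerivWithinAt
  obtain ⟨ε, hε, hpos⟩ := mem_nhdsGT_iff_exists_Ioo_subset.1 <|
    nhdsWithin_le_nhds (hg'a.eventually (lt_mem_nhds hg'a_pos))
  obtain ⟨s, hs, hslope⟩ := exists_hasDerivAt_eq_slope g g' hε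
    (hcont.mono Icc_subset_Ici_self) fun t ht => hg t ht.1.le
  have hgε : g a < g ε := by
    have := hpos hs
    rw [Set.mem_ofPred_eq, hslope, div_pos_iff_of_pos_right (sub_pos.2 hε)] at this
    linarith
  refine hgε.trans_le <| ge_of_tendsto hL <| eventually_atTop.2 ⟨ε, fun t ht => ?_⟩
  exact hmono (mem_Ici.2 (le_of_lt hε)) (mem_Ici.2 ((le_of_lt hε).trans ht)) ht

theorem HasDerivAt.dotProduct_mulVec {𝕜 m n : Type*} [RCLike 𝕜] [Fintype m] [Fintype n]
    {M : 𝕜 → Matrix m n 𝕜} {M' : Matrix m n 𝕜} {t : 𝕜} (h : HasDerivAt M M' t) (c : m → 𝕜)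
    (v : n → 𝕜) : HasDerivAt (fun s => c ⬝ᵥ M s *ᵥ v) (c ⬝ᵥ M' *ᵥ v) t :=
  (LinearMap.toContinuousLinearMap
    (dotProductBilin 𝕜 𝕜 c ∘ₗ (mulVecBilin 𝕜 𝕜).flip v)).hasFDerivAt.comp_hasDerivAt t h

theorem dotProduct_mul_one_add_eq_of_mulVec_eq_smul {R ι : Type*} [CommRing R] [Fintype ι]
    [DecidableEq ι] {A : Matrix ι ι R} (hA : IsUnit A.det) {b c v : ι → R} {lam : R}
    (hev : (A + vecMulVec b c) *ᵥ v = lam • v) :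
    (c ⬝ᵥ v) * (1 + c ⬝ᵥ A⁻¹ *ᵥ b) = lam * (c ⬝ᵥ A⁻¹ *ᵥ v) := by
  have h := congrArg (fun w => c ⬝ᵥ A⁻¹ *ᵥ w) hev
  simp only [add_mulVec, vecMulVec_mulVec, mulVec_add, mulVec_mulVec, nonsing_inv_mul _ hA,
    one_mulVec, mulVec_smul, dotProduct_add, dotProduct_smul] at h
  simpa [mul_add, mul_comm] using h

theorem Hurwitz.dotProduct_inv_mulVec_neg {n : ℕ} {A : Matrix (Fin n) (Fin n) ℝ} (hA : Hurwitz A)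
    {c v : Fin n → ℝ} (hpos : ∀ t : ℝ, 0 ≤ t → 0 ≤ c ⬝ᵥ mexp (t • A) *ᵥ v) (hcv : 0 < c ⬝ᵥ v) :
    c ⬝ᵥ A⁻¹ *ᵥ v < 0 := by
  have hderiv (t : ℝ) : HasDerivAt (fun s : ℝ => c ⬝ᵥ (A⁻¹ * mexp (s • A)) *ᵥ v)
      (c ⬝ᵥ mexp (t • A) *ᵥ v) t := by
    have h := ((hasDerivAt_exp_smul_const' A t).const_mul A⁻¹).dotProduct_mulVec c v
    rwa [nonsing_inv_mul_cancel_left _ _ hA.isUnit_det] at h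
  have hcont : ContinuousAt (fun t : ℝ => c ⬝ᵥ mexp (t • A) *ᵥ v) 0 :=
    ((hasDerivAt_exp_smul_const' A 0).dotProduct_mulVec c v).continuousAt
  have hlim : Tendsto (fun s : ℝ => c ⬝ᵥ (A⁻¹ * mexp (s • A)) *ᵥ v) atTop (𝓝 0) := by
    have hL : Continuous fun w => c ⬝ᵥ A⁻¹ *ᵥ w :=
      continuous_const.dotProduct (continuous_const.matrix_mulVec continuous_id)
    simpa [Function.comp_def, ← mulVec_mulVec] using
      (hL.tendsto 0).comp (hA.tendsto_mexp_smul_mulVec_atTop v)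
  simpa [mexp_zero] using lt_of_hasDerivAt_nonneg_of_tendsto_atTop (fun t _ => hderiv t)
    hpos hcont (by simpa [mexp_zero] using hcv) hlim

/-- Stability dichotomy for the dominant eigenvalue of the closed-loop linearization
(proof of Theorem 7): with `k' = -cᵀ A⁻¹ b`, one has `λ < 0 ↔ k' < 1` and `λ > 0 ↔ k' > 1`. -/
theorem stmt11 {n : ℕ} (A : Matrix (Fin n) (Fin n) ℝ) (b c : Fin n → ℝ)
    (hA : Hurwitz A) (lam : ℝ) (v : Fin n → ℝ)
    (hev : (A + Matrix.vecMulVec b c).mulVec v = lam • v)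
    (hpos : ∀ t : ℝ, 0 ≤ t → 0 ≤ c ⬝ᵥ (mexp (t • A)).mulVec v)
    (hcv : c ⬝ᵥ v ≠ 0) :
    (lam < 0 ↔ -(c ⬝ᵥ A⁻¹.mulVec b) < 1) ∧
    (lam > 0 ↔ -(c ⬝ᵥ A⁻¹.mulVec b) > 1) := by
  have hcv_pos : 0 < c ⬝ᵥ v := by
    simpa [mexp_zero] using (hpos 0 le_rfl).lt_of_ne' (by simpa [mexp_zero] using hcv)
  have hinv_neg := hA.dotProduct_inv_mulVec_neg hpos hcv_pos
  have hrel := dotProduct_mul_one_add_eq_of_mulVec_eq_smul hA.isUnit_det hev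
  constructor <;> constructor <;> intro h <;> nlinarith
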